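/- arXiv:2512.02345 — 3 statements merged into one kernel-verified Lean document; each statement's English description precedes it below -/
import Mathlib

section
/- Let F be a field of characteristic zero and let h, j : ℕ → F be sequences with h 0 = 1 and j 1 = 1 satisfying equation (D1): n·h_n = Σ_{r=1}^{n} j_r · h_{n-r} for all n ≥ 1. For n ≥ 1 let J_n(j̄) be the n×n matrix over F whose entry in row i and column k (1 ≤ i,k ≤ n) equals j_{i-k+1} if k ≤ i, equals -i if k = i+1, and equals 0 if k > i+1. Then for all n ≥ 1: det(J_n(j̄)) = 0 if and only if h_n = 0; equivalently, 0 is an eigenvalue of J_n(j̄) if and only if h_n = 0. -/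
/-!
Applied to the vector `(h 0, …, h (n-1))`, row `i < n - 1` of `J_n` gives, by (D1),
`(i+1) h (i+1) - (i+1) h (i+1) = 0`, while the last row gives `n h n`; so `J_n h = n h_n eₙ`.
Conversely, the first `n - 1` rows of `J_n v = 0` say that `v` satisfies (D1) below index `n`,
and in characteristic zero (D1) determines a sequence from its first term, so `v = v 0 • h`.
Hence `J_n` has a nonzero kernel exactly when `h n = 0`.
-/

/-- The matrix `J_n(j̄)`: entries `j (i - k + 1)` in (1-based) row `i`, column `k` for
`k ≤ i`, superdiagonal entry `-i` in row `i`, column `i + 1`, and `0` above the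
superdiagonal. -/
def Jmat {F : Type*} [Field F] (j : ℕ → F) (n : ℕ) : Matrix (Fin n) (Fin n) F :=
  Matrix.of fun i k =>
    if (k : ℕ) ≤ (i : ℕ) then j ((i : ℕ) - (k : ℕ) + 1)
    else if (k : ℕ) = (i : ℕ) + 1 then -(((i : ℕ) + 1 : ℕ) : F)
    else 0

open Finset Matrix

section
variable {F : Type*} [Field F]

lemma Jmat_mulVec (j : ℕ → F) (n : ℕ) (v : ℕ → F) (i : Fin n) :
    (Jmat j n *ᵥ fun k => v k) i
      = (∑ r ∈ Icc 1 ((i : ℕ) + 1), j r * v (i + 1 - r))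
        - if (i : ℕ) + 1 < n then ((i + 1 : ℕ) : F) * v (i + 1) else 0 := by
  set m := (i : ℕ)
  have hm : m < n := i.isLt
  let c : ℕ → F := fun k =>
    if k ≤ m then j (m - k + 1) else if k = m + 1 then -((m + 1 : ℕ) : F) else 0
  have hrow : (Jmat j n *ᵥ fun k => v k) i = ∑ k ∈ range n, c k * v k :=
    Fin.sum_univ_eq_sum_range (fun k => c k * v k) n
  have hlower :
      ∑ k ∈ range (m + 1), c k * v k = ∑ r ∈ Icc 1 (m + 1), j r * v (m + 1 - r) := by
    refine sum_nbij' (fun k => m + 1 - k) (fun r => m + 1 - r) ?_ ?_ ?_ ?_ ?_ <;>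
      intro k hk <;> simp only [mem_range, mem_Icc] at hk ⊢
    any_goals omega
    simp only [c, if_pos (Nat.lt_succ_iff.mp hk)]
    congr 2 <;> omega
  have hsuper : ∑ k ∈ Ico (m + 1) n, c k * v k
      = -if m + 1 < n then ((m + 1 : ℕ) : F) * v (m + 1) else 0 := by
    calc ∑ k ∈ Ico (m + 1) n, c k * v k
        = ∑ k ∈ Ico (m + 1) n, if m + 1 = k then -(((m + 1 : ℕ) : F) * v (m + 1)) else 0 := by
          refine sum_congr rfl fun k hk => ?_
          rw [mem_Ico] at hk
          by_cases hk' : m + 1 = k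
          · simp only [c, ← hk', Nat.not_succ_le_self, if_false, if_true]
            ring
          · simp [c, hk', Ne.symm hk', show ¬k ≤ m by omega]
      _ = _ := by
          rw [sum_ite_eq, apply_ite Neg.neg, neg_zero]
          simp only [mem_Ico, le_refl, true_and]
  rw [hrow, range_eq_Ico, ← sum_Ico_consecutive _ (Nat.zero_le (m + 1)) hm, ← range_eq_Ico,
    hlower, hsuper, sub_eq_add_neg]

lemma Jmat_mulVec_eq_single {j h : ℕ → F}
    (hD : ∀ m : ℕ, 1 ≤ m → m • h m = ∑ r ∈ Icc 1 m, j r * h (m - r)) (n : ℕ) :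
    (Jmat j (n + 1) *ᵥ fun k => h k) =
      Pi.single (Fin.last n) (((n + 1 : ℕ) : F) * h (n + 1)) := by
  ext i
  rw [Jmat_mulVec]
  by_cases hi : (i : ℕ) + 1 < n + 1
  · have hne : i ≠ Fin.last n := fun hl => by simp [hl] at hi
    rw [if_pos hi, ← nsmul_eq_mul, ← hD _ le_add_self, sub_self, Pi.single_eq_of_ne hne]
  · obtain rfl : i = Fin.last n := Fin.ext (by simp only [Fin.val_last]; omega)
    rw [if_neg hi, sub_zero, Pi.single_eq_same, ← nsmul_eq_mul, Fin.val_last, hD _ le_add_self]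

variable [CharZero F]

lemma eq_mul_of_recurrence {j h w : ℕ → F} {N : ℕ} (h0 : h 0 = 1)
    (hh : ∀ m : ℕ, 1 ≤ m → m • h m = ∑ r ∈ Icc 1 m, j r * h (m - r))
    (hw : ∀ m : ℕ, 1 ≤ m → m < N → m • w m = ∑ r ∈ Icc 1 m, j r * w (m - r)) :
    ∀ m < N, w m = w 0 * h m := by
  intro m
  induction m using Nat.strong_induction_on with
  | _ m ih =>
  intro hm
  rcases Nat.eq_zero_or_pos m with rfl | hpos
  · rw [h0, mul_one]
  have hm0 : (m : F) ≠ 0 := Nat.cast_ne_zero.mpr hpos.ne'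
  refine mul_left_cancel₀ hm0 ?_
  calc (m : F) * w m = ∑ r ∈ Icc 1 m, j r * (w 0 * h (m - r)) := by
        rw [← nsmul_eq_mul, hw m hpos hm]
        refine sum_congr rfl fun r hr => ?_
        rw [mem_Icc] at hr
        rw [ih (m - r) (by omega) (by omega)]
    _ = w 0 * (m • h m) := by
        rw [hh m hpos, mul_sum]
        exact sum_congr rfl fun r _ => mul_left_comm _ _ _
    _ = m * (w 0 * h m) := by rw [nsmul_eq_mul, mul_left_comm]

lemma eq_smul_of_Jmat_mulVec_eq_zero {j h : ℕ → F} (h0 : h 0 = 1)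
    (hD : ∀ m : ℕ, 1 ≤ m → m • h m = ∑ r ∈ Icc 1 m, j r * h (m - r)) {n : ℕ}
    {v : Fin (n + 1) → F} (hv : Jmat j (n + 1) *ᵥ v = 0) :
    v = v 0 • fun k : Fin (n + 1) => h k := by
  set w : ℕ → F := fun k => if hk : k < n + 1 then v ⟨k, hk⟩ else 0
  have hvw : v = fun k : Fin (n + 1) => w k := funext fun k => by simp [w, k.is_le]
  have hw :
      ∀ m : ℕ, 1 ≤ m → m < n + 1 → m • w m = ∑ r ∈ Icc 1 m, j r * w (m - r) := by
    intro m hm1 hm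
    have hrow := congrFun hv ⟨m - 1, by omega⟩
    rw [hvw, Jmat_mulVec] at hrow
    simp only [Nat.sub_add_cancel hm1, if_pos hm, Pi.zero_apply] at hrow
    rw [nsmul_eq_mul]
    exact (sub_eq_zero.mp hrow).symm
  ext k
  rw [hvw]
  exact eq_mul_of_recurrence h0 hD hw k k.isLt

lemma exists_Jmat_mulVec_eq_zero_iff {j h : ℕ → F} (h0 : h 0 = 1)
    (hD : ∀ m : ℕ, 1 ≤ m → m • h m = ∑ r ∈ Icc 1 m, j r * h (m - r)) (n : ℕ) :
    (∃ v ≠ 0, Jmat j (n + 1) *ᵥ v = 0) ↔ h (n + 1) = 0 := by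
  constructor
  · rintro ⟨v, hv0, hv⟩
    have hvh := eq_smul_of_Jmat_mulVec_eq_zero h0 hD hv
    have hv00 : v 0 ≠ 0 := fun h' => hv0 (by rw [hvh, h', zero_smul])
    rw [hvh, mulVec_smul, Jmat_mulVec_eq_single hD, ← Pi.single_smul, Pi.single_eq_zero_iff,
      smul_eq_zero, mul_eq_zero] at hv
    simpa [hv00, Nat.cast_add_one_ne_zero] using hv
  · intro hn
    refine ⟨fun k : Fin (n + 1) => h k, fun h' => by simpa [h0] using congrFun h' 0, ?_⟩
    rw [Jmat_mulVec_eq_single hD, hn, mul_zero, Pi.single_zero]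

end

theorem det_Jmat_eq_zero_iff_general {F : Type*} [Field F] [CharZero F] (h j : ℕ → F)
    (h0 : h 0 = 1)
    (hD : ∀ n : ℕ, 1 ≤ n → n • h n = ∑ r ∈ Finset.Icc 1 n, j r * h (n - r)) :
    ∀ n : ℕ, 1 ≤ n →
      (((Jmat j n).det = 0 ↔ h n = 0) ∧
        (Module.End.HasEigenvalue (Matrix.toLin' (Jmat j n)) 0 ↔ h n = 0)) := by
  intro n hn
  obtain ⟨n, rfl⟩ := Nat.exists_eq_add_of_le' hn
  have hdet : (Jmat j (n + 1)).det = 0 ↔ h (n + 1) = 0 :=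
    exists_mulVec_eq_zero_iff.symm.trans (exists_Jmat_mulVec_eq_zero_iff h0 hD n)
  refine ⟨hdet, ?_⟩
  rw [← hdet, ← LinearMap.det_toLin']
  exact (LinearMap.hasEigenvalue_zero_tfae _).out 0 3

/-- Over a field of characteristic zero, if `h 0 = 1`, `j 1 = 1` and (D1) holds, then
for all `n ≥ 1`: `det (J_n(j̄)) = 0 ↔ h n = 0`; equivalently, `0` is an eigenvalue of
`J_n(j̄)` iff `h n = 0`. -/
theorem det_Jmat_eq_zero_iff {F : Type*} [Field F] [CharZero F] (h j : ℕ → F)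
    (h0 : h 0 = 1) (j1 : j 1 = 1)
    (hD : ∀ n : ℕ, 1 ≤ n → n • h n = ∑ r ∈ Finset.Icc 1 n, j r * h (n - r)) :
    ∀ n : ℕ, 1 ≤ n →
      (((Jmat j n).det = 0 ↔ h n = 0) ∧
        (Module.End.HasEigenvalue (Matrix.toLin' (Jmat j n)) 0 ↔ h n = 0)) :=
  det_Jmat_eq_zero_iff_general h j h0 hD
end

section
/- Let F be a field of characteristic zero and let h, j : ℕ → F be sequences with h 0 = 1 and j 1 = 1 satisfying equation (D1): n·h_n = Σ_{r=1}^{n} j_r · h_{n-r} for all n ≥ 1. For n ≥ 1 let H_n(h̄) be the n×n matrix over F whose entry in row i and column k (1 ≤ i,k ≤ n) equals i·h_i if k = 1, equals h_{i-k+1} if 2 ≤ k ≤ i, equals 1 if k = i+1, and equals 0 if k > i+1. Then for all n ≥ 1: det(H_n(h̄)) = 0 if and only if j_n = 0; equivalently, 0 is an eigenvalue of H_n(h̄) if and only if j_n = 0. -/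
/-!
The vector `c = (1, -j₁, …, -jₘ)` satisfies `H_{m+1} c = j_{m+1} e_{m+1}`: row `i` of this identity
is (D1) at `i + 1`, the superdiagonal entry `1` playing the role of `h₀`. Multiplying by the
adjugate and reading off the first coordinate gives `det H_{m+1} = (-1)ᵐ j_{m+1}` times the minor
obtained by deleting the last row and the first column, which is lower unitriangular.
-/

/-- The matrix `H_n(h̄)`: first column `(h 1, 2 • h 2, …, n • h n)ᵀ`, entries `h (i - k + 1)`
in (1-based) row `i`, column `k` for `2 ≤ k ≤ i`, superdiagonal entries `1`, and `0` above
the superdiagonal. -/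
def Hmat {F : Type*} [Field F] (h : ℕ → F) (n : ℕ) : Matrix (Fin n) (Fin n) F :=
  Matrix.of fun i k =>
    if (k : ℕ) = 0 then ((i : ℕ) + 1) • h ((i : ℕ) + 1)
    else if (k : ℕ) ≤ (i : ℕ) then h ((i : ℕ) - (k : ℕ) + 1)
    else if (k : ℕ) = (i : ℕ) + 1 then 1
    else 0

namespace Matrix

variable {n R : Type*} [Fintype n] [DecidableEq n]

theorem det_mul_eq_adjugate_mul_of_mulVec_eq_single [CommRing R] {A : Matrix n n R} {c : n → R}
    {i : n} {x : R} (hc : A *ᵥ c = Pi.single i x) (k : n) :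
    A.det * c k = A.adjugate k i * x := by
  have := congr_fun (congrArg (A.adjugate *ᵥ ·) hc) k
  simpa [mulVec_mulVec, adjugate_mul, smul_mulVec, mulVec_single] using this

theorem hasEigenvalue_toLin'_zero_iff_det_eq_zero [Field R] (A : Matrix n n R) :
    Module.End.HasEigenvalue (toLin' A) 0 ↔ A.det = 0 := by
  rw [← LinearMap.det_toLin']
  exact (LinearMap.hasEigenvalue_zero_tfae _).out 0 3

end Matrix

section Hmat

open Matrix

variable {F : Type*} [Field F] {h j : ℕ → F}

theorem succ_nsmul_eq_sum_range
    (hD : ∀ n : ℕ, 1 ≤ n → n • h n = ∑ r ∈ Finset.Icc 1 n, j r * h (n - r)) (k : ℕ) :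
    (k + 1) • h (k + 1) = ∑ i ∈ Finset.range (k + 1), j (i + 1) * h (k - i) := by
  rw [hD (k + 1) k.succ_pos, ← Finset.Ico_add_one_right_eq_Icc, Finset.sum_Ico_eq_sum_range]
  refine Finset.sum_congr (by simp) fun i _ => ?_
  rw [add_comm 1 i, Nat.add_sub_add_right]

theorem Hmat_apply_zero {m : ℕ} (i : Fin (m + 1)) :
    Hmat h (m + 1) i 0 = ((i : ℕ) + 1) • h ((i : ℕ) + 1) := by
  simp [Hmat]

theorem Hmat_apply_succ (h0 : h 0 = 1) {m : ℕ} (i : Fin (m + 1)) (k : Fin m) :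
    Hmat h (m + 1) i k.succ = if (k : ℕ) ≤ i then h (i - k) else 0 := by
  simp only [Hmat, of_apply, Fin.val_succ, Nat.add_one_ne_zero, if_false]
  rcases lt_trichotomy (k : ℕ) i with hlt | heq | hgt
  · rw [if_pos (Nat.succ_le_of_lt hlt), if_pos hlt.le]
    congr 1
    omega
  · simp [heq, h0]
  · rw [if_neg (by omega), if_neg (by omega), if_neg (by omega)]

theorem det_Hmat_submatrix_last_zero (h0 : h 0 = 1) (m : ℕ) :
    ((Hmat h (m + 1)).submatrix (Fin.last m).succAbove (0 : Fin (m + 1)).succAbove).det = 1 := by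
  have hentry (a b : Fin m) :
      (Hmat h (m + 1)).submatrix (Fin.last m).succAbove (0 : Fin (m + 1)).succAbove a b
        = if (b : ℕ) ≤ a then h (a - b) else 0 := by
    simp [Fin.succAbove_last, Hmat_apply_succ h0]
  rw [det_of_isLowerTriangular]
  · exact Finset.prod_eq_one fun a _ => by rw [hentry, if_pos le_rfl, Nat.sub_self, h0]
  · intro a b hab
    rw [hentry, if_neg (not_le.mpr (Fin.lt_def.mp (OrderDual.toDual_lt_toDual.mp hab)))]

def jVec (j : ℕ → F) (m : ℕ) : Fin (m + 1) → F :=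
  Fin.cons 1 fun k => -j (k + 1)

theorem Hmat_mulVec_jVec (h0 : h 0 = 1)
    (hD : ∀ n : ℕ, 1 ≤ n → n • h n = ∑ r ∈ Finset.Icc 1 n, j r * h (n - r)) (m : ℕ) :
    Hmat h (m + 1) *ᵥ jVec j m = Pi.single (Fin.last m) (j (m + 1)) := by
  ext i
  set f : ℕ → F := fun k => j (k + 1) * h (i - k)
  have hrow : (Hmat h (m + 1) *ᵥ jVec j m) i
      = ((i : ℕ) + 1) • h ((i : ℕ) + 1) - ∑ k ∈ Finset.range m, if k ≤ i then f k else 0 := by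
    simp only [mulVec, dotProduct, Fin.sum_univ_succ, jVec, Fin.cons_zero, Fin.cons_succ,
      Hmat_apply_zero, Hmat_apply_succ h0, mul_one, mul_neg, Finset.sum_neg_distrib,
      ← sub_eq_add_neg]
    rw [← Fin.sum_univ_eq_sum_range (fun k => if k ≤ i then f k else 0)]
    simp [f, mul_comm]
  have htrunc : ∑ k ∈ Finset.range ((i : ℕ) + 1), f k
      = ∑ k ∈ Finset.range (m + 1), if k ≤ i then f k else 0 := by
    rw [← Finset.sum_filter]
    congr 1
    ext k
    simp only [Finset.mem_range, Finset.mem_filter]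
    omega
  rw [hrow, succ_nsmul_eq_sum_range hD, htrunc, Finset.sum_range_succ, add_sub_cancel_left,
    Pi.single_apply]
  by_cases hi : i = Fin.last m
  · simp [hi, f, h0]
  · rw [if_neg (not_le.mpr (Fin.val_lt_last hi)), if_neg hi]

theorem det_Hmat_succ (h0 : h 0 = 1)
    (hD : ∀ n : ℕ, 1 ≤ n → n • h n = ∑ r ∈ Finset.Icc 1 n, j r * h (n - r)) (m : ℕ) :
    (Hmat h (m + 1)).det = (-1) ^ m * j (m + 1) := by
  have key := det_mul_eq_adjugate_mul_of_mulVec_eq_single (Hmat_mulVec_jVec h0 hD m) 0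
  rwa [jVec, Fin.cons_zero, mul_one, adjugate_fin_succ_eq_det_submatrix,
    det_Hmat_submatrix_last_zero h0, Fin.val_last, Fin.val_zero, add_zero, mul_one] at key

end Hmat

theorem det_Hmat_eq_zero_iff_general {F : Type*} [Field F] (h j : ℕ → F)
    (h0 : h 0 = 1)
    (hD : ∀ n : ℕ, 1 ≤ n → n • h n = ∑ r ∈ Finset.Icc 1 n, j r * h (n - r)) :
    ∀ n : ℕ, 1 ≤ n →
      (((Hmat h n).det = 0 ↔ j n = 0) ∧
        (Module.End.HasEigenvalue (Matrix.toLin' (Hmat h n)) 0 ↔ j n = 0)) := by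
  intro n hn
  obtain ⟨m, rfl⟩ := Nat.exists_eq_add_of_le' hn
  have hdet : (Hmat h (m + 1)).det = 0 ↔ j (m + 1) = 0 := by
    simp [det_Hmat_succ h0 hD m]
  exact ⟨hdet, (Matrix.hasEigenvalue_toLin'_zero_iff_det_eq_zero _).trans hdet⟩

/-- Over a field of characteristic zero, if `h 0 = 1`, `j 1 = 1` and (D1) holds, then
for all `n ≥ 1`: `det (H_n(h̄)) = 0 ↔ j n = 0`; equivalently, `0` is an eigenvalue of
`H_n(h̄)` iff `j n = 0`. -/
theorem det_Hmat_eq_zero_iff {F : Type*} [Field F] [CharZero F] (h j : ℕ → F)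
    (h0 : h 0 = 1) (j1 : j 1 = 1)
    (hD : ∀ n : ℕ, 1 ≤ n → n • h n = ∑ r ∈ Finset.Icc 1 n, j r * h (n - r)) :
    ∀ n : ℕ, 1 ≤ n →
      (((Hmat h n).det = 0 ↔ j n = 0) ∧
        (Module.End.HasEigenvalue (Matrix.toLin' (Hmat h n)) 0 ↔ j n = 0)) :=
  det_Hmat_eq_zero_iff_general h j h0 hD
end

section
/- Let F be a field of characteristic zero and let f : ℕ → F be a sequence with f 1 = 1. Define j : ℕ → F by h := (1, f 1, f 2, …) (i.e., h 0 = 1 and h n = f n for n ≥ 1) and letting j be the unique sequence with j 0 = 0 satisfying n·h_n = Σ_{r=1}^{n} j_r h_{n-r} for all n ≥ 1; separately define h' : ℕ → F by setting j' n = f n for n ≥ 1, h' 0 = 1, and letting h' be the unique sequence satisfying n·h'_n = Σ_{r=1}^{n} j'_r h'_{n-r} for all n ≥ 1. Let J_n(j̄) be the n×n matrix with entry j_{i-k+1} in row i, column k for k ≤ i, entry -i in row i and column i+1, and 0 above the superdiagonal; let H_n(h̄') be the n×n matrix with entry i·h'_i in row i, column 1, entry h'_{i-k+1} in row i, column k for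 2 ≤ k ≤ i, entry 1 in row i and column i+1, and 0 above the superdiagonal. Then for every n ≥ 1 the following are equivalent: (a) f n = 0; (b) det(J_n(j̄)) = 0; (c) det(H_n(h̄')) = 0. -/
open Finset


lemma det_aux {F : Type*} [Field F] {m : ℕ} (A : Matrix (Fin (m+1)) (Fin (m+1)) F)
    (v : Fin (m+1) → F) (d : F)
    (hrow : ∀ i : Fin (m+1), (∑ k, v k * A i k) = if i = Fin.last m then d else 0) :
    v 0 * A.det = (-1:F)^m * d * (A.submatrix Fin.castSucc Fin.succ).det := by
  classical
  have h1 := Matrix.det_updateCol_sum A 0 v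
  have hBe : (A.updateCol 0 (fun k => ∑ i, v i • A k i)) =
      A.updateCol 0 (fun i => if i = Fin.last m then d else 0) := by
    apply congrArg (A.updateCol 0)
    funext i
    simpa [smul_eq_mul] using hrow i
  rw [hBe] at h1
  set B := A.updateCol 0 (fun i => if i = Fin.last m then d else 0) with hB
  have h2 : B.det = (-1:F)^m * (d * (A.submatrix Fin.castSucc Fin.succ).det) := by
    rw [Matrix.det_succ_column_zero]
    rw [Finset.sum_eq_single (Fin.last m)]
    · have hb0 : B (Fin.last m) 0 = d := by
        simp [hB, Matrix.updateCol_self]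
      have hsub : B.submatrix (Fin.last m).succAbove Fin.succ
          = A.submatrix Fin.castSucc Fin.succ := by
        ext i k
        simp [hB, Matrix.submatrix, Fin.succAbove_last,
          Matrix.updateCol_ne (Fin.succ_ne_zero k)]
      rw [hb0, hsub, Fin.val_last, mul_assoc]
    · intro i _ hi
      have : B i 0 = 0 := by simp [hB, Matrix.updateCol_self, hi]
      simp [this]
    · intro hmem
      exact absurd (Finset.mem_univ _) hmem
  rw [h2] at h1
  rw [smul_eq_mul] at h1
  rw [← h1]; ring

/-- The basic consequence of recurrence (D1) as a `range` sum. -/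
lemma Dsum {F : Type*} [Field F] (j h : ℕ → F)
    (hD : ∀ n : ℕ, 1 ≤ n → n • h n = ∑ r ∈ Finset.Icc 1 n, j r * h (n - r)) (i0 : ℕ) :
    ∑ k ∈ range (i0+1), j (k+1) * h (i0-k) = ((i0+1 : ℕ) : F) * h (i0+1) := by
  have h1 := hD (i0+1) (by omega)
  rw [← Finset.Ico_add_one_right_eq_Icc, Finset.sum_Ico_eq_sum_range] at h1
  rw [nsmul_eq_mul] at h1
  rw [h1]
  refine Finset.sum_congr (by simp) fun k hk => ?_
  simp only [Finset.mem_range] at hk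
  have e1 : 1 + k = k + 1 := by omega
  rw [e1]
  have e3 : i0 + 1 - (k + 1) = i0 - k := by omega
  rw [e3]

lemma rowJ {F : Type*} [Field F] (j h : ℕ → F)
    (hD : ∀ n : ℕ, 1 ≤ n → n • h n = ∑ r ∈ Finset.Icc 1 n, j r * h (n - r))
    {m i0 : ℕ} (hi : i0 ≤ m) :
    (∑ k ∈ range (m+1), h k *
        (if k ≤ i0 then j (i0 - k + 1) else if k = i0 + 1 then -((i0 + 1 : ℕ) : F) else 0))
      = if i0 = m then ((m + 1 : ℕ) : F) * h (m + 1) else 0 := by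
  have base : ∑ k ∈ range (i0+1), h k * j (i0 - k + 1) = ((i0+1 : ℕ) : F) * h (i0+1) := by
    rw [← Finset.sum_range_reflect (fun k => h k * j (i0 - k + 1)) (i0+1), ← Dsum j h hD i0]
    refine Finset.sum_congr rfl fun k hk => ?_
    rw [Finset.mem_range] at hk
    have e1 : i0 + 1 - 1 - k = i0 - k := by omega
    have e2 : i0 - (i0 - k) + 1 = k + 1 := by omega
    rw [e1, e2, mul_comm]
  rcases eq_or_lt_of_le hi with rfl | him
  · rw [if_pos rfl, ← base]
    refine Finset.sum_congr rfl fun k hk => ?_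
    rw [Finset.mem_range] at hk
    rw [if_pos (by omega)]
  · rw [if_neg (by omega)]
    have hsub : range (i0+2) ⊆ range (m+1) := by
      intro x hx; rw [Finset.mem_range] at *; omega
    have hz : ∀ k ∈ range (m+1), k ∉ range (i0+2) →
        h k * (if k ≤ i0 then j (i0 - k + 1) else if k = i0 + 1 then -((i0 + 1 : ℕ) : F) else 0)
          = 0 := by
      intro k _ hk
      rw [Finset.mem_range] at hk
      rw [if_neg (by omega), if_neg (by omega), mul_zero]
    rw [← Finset.sum_subset hsub hz, Finset.sum_range_succ]
    rw [if_neg (by omega), if_pos rfl]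
    have hmid : ∑ k ∈ range (i0+1), h k *
        (if k ≤ i0 then j (i0 - k + 1) else if k = i0 + 1 then -((i0 + 1 : ℕ) : F) else 0)
        = ((i0+1 : ℕ) : F) * h (i0+1) := by
      rw [← base]
      refine Finset.sum_congr rfl fun k hk => ?_
      rw [Finset.mem_range] at hk
      rw [if_pos (by omega)]
    rw [hmid]; ring

lemma rowH {F : Type*} [Field F] (j h : ℕ → F) (hh0 : h 0 = 1)
    (hD : ∀ n : ℕ, 1 ≤ n → n • h n = ∑ r ∈ Finset.Icc 1 n, j r * h (n - r))
    {m i0 : ℕ} (hi : i0 ≤ m) :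
    (∑ k ∈ range (m+1), (if k = 0 then (-1 : F) else j k) *
        (if k = 0 then ((i0+1) • h (i0+1) : F)
          else if k ≤ i0 then h (i0 - k + 1) else if k = i0 + 1 then 1 else 0))
      = if i0 = m then -(j (m+1)) else 0 := by
  rw [Finset.sum_range_succ']
  have hshift : ∀ k : ℕ, ((if k + 1 = 0 then (-1 : F) else j (k + 1)) *
      (if k + 1 = 0 then ((i0+1) • h (i0+1) : F)
        else if k + 1 ≤ i0 then h (i0 - (k+1) + 1) else if k + 1 = i0 + 1 then 1 else 0))
      = j (k + 1) * (if k + 1 ≤ i0 then h (i0 - (k+1) + 1)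
          else if k + 1 = i0 + 1 then 1 else 0) := by
    intro k
    rw [if_neg (Nat.succ_ne_zero k), if_neg (Nat.succ_ne_zero k)]
  have h0term : ((if (0:ℕ) = 0 then (-1 : F) else j 0) *
      (if (0:ℕ) = 0 then ((i0+1) • h (i0+1) : F)
        else if (0:ℕ) ≤ i0 then h (i0 - 0 + 1) else if (0:ℕ) = i0 + 1 then 1 else 0))
      = -(((i0 + 1 : ℕ) : F) * h (i0+1)) := by
    rw [if_pos rfl, if_pos rfl, nsmul_eq_mul]
    push_cast
    ring
  rw [Finset.sum_congr rfl (fun k _ => hshift k), h0term]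
  rcases eq_or_lt_of_le hi with heq | him
  · subst heq
    rw [if_pos rfl]
    have hmid : ∑ k ∈ range i0, j (k+1) *
        (if k + 1 ≤ i0 then h (i0 - (k+1) + 1) else if k + 1 = i0 + 1 then 1 else 0)
        = ∑ k ∈ range i0, j (k+1) * h (i0 - k) := by
      refine Finset.sum_congr rfl fun k hk => ?_
      rw [Finset.mem_range] at hk
      rw [if_pos (by omega)]
      congr 2
      omega
    rw [hmid]
    have hD1 := Dsum j h hD i0
    rw [Finset.sum_range_succ] at hD1
    have : i0 - i0 = 0 := by omega
    rw [this, hh0, mul_one] at hD1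
    linear_combination hD1
  · rw [if_neg (by omega)]
    have hsub : range (i0+1) ⊆ range m := by
      intro x hx; rw [Finset.mem_range] at *; omega
    have hz : ∀ k ∈ range m, k ∉ range (i0+1) →
        j (k+1) * (if k + 1 ≤ i0 then h (i0 - (k+1) + 1) else if k + 1 = i0 + 1 then 1 else 0)
          = 0 := by
      intro k _ hk
      rw [Finset.mem_range] at hk
      rw [if_neg (by omega), if_neg (by omega), mul_zero]
    rw [← Finset.sum_subset hsub hz]
    have hmid : ∑ k ∈ range (i0+1), j (k+1) *
        (if k + 1 ≤ i0 then h (i0 - (k+1) + 1) else if k + 1 = i0 + 1 then 1 else 0)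
        = ∑ k ∈ range (i0+1), j (k+1) * h (i0 - k) := by
      refine Finset.sum_congr rfl fun k hk => ?_
      rw [Finset.mem_range] at hk
      rcases Nat.lt_or_ge k i0 with hki | hki
      · rw [if_pos (by omega)]
        congr 2
        omega
      · have hkeq : k = i0 := by omega
        rw [if_neg (by omega), if_pos (by omega)]
        have e : i0 - k = 0 := by omega
        rw [e, hh0]
    rw [hmid, Dsum j h hD i0]
    ring

lemma minorJ {F : Type*} [Field F] (j : ℕ → F) (m : ℕ) :
    ((Jmat j (m+1)).submatrix Fin.castSucc Fin.succ).det = (-1:F)^m * (m.factorial : F) := by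
  rw [Matrix.det_of_lowerTriangular _ ?_]
  · have hdiag : ∀ i : Fin m, (Jmat j (m+1)).submatrix Fin.castSucc Fin.succ i i
        = -(((i : ℕ) + 1 : ℕ) : F) := by
      intro i
      simp only [Matrix.submatrix_apply, Jmat, Matrix.of_apply, Fin.coe_castSucc, Fin.val_succ]
      rw [if_neg (by omega)]
      simp
    rw [Finset.prod_congr rfl (fun i _ => hdiag i)]
    have : ∀ i : Fin m, -((((i : ℕ) + 1 : ℕ)) : F) = (-1 : F) * (((i : ℕ) + 1 : ℕ) : F) := by
      intro i; ring
    rw [Finset.prod_congr rfl (fun i _ => this i), Finset.prod_mul_distrib,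
      Finset.prod_const, Finset.card_univ, Fintype.card_fin]
    congr 1
    rw [← Nat.cast_prod]
    congr 1
    rw [Fin.prod_univ_eq_prod_range (fun k => k + 1) m]
    exact Finset.prod_range_add_one_eq_factorial m
  · intro a b hab
    have hab' : (a : ℕ) < (b : ℕ) := hab
    simp only [Matrix.submatrix_apply, Jmat, Matrix.of_apply, Fin.coe_castSucc, Fin.val_succ]
    rw [if_neg (by omega), if_neg (by omega)]

lemma minorH {F : Type*} [Field F] (h : ℕ → F) (m : ℕ) :
    ((Hmat h (m+1)).submatrix Fin.castSucc Fin.succ).det = 1 := by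
  rw [Matrix.det_of_lowerTriangular _ ?_]
  · have hdiag : ∀ i : Fin m, (Hmat h (m+1)).submatrix Fin.castSucc Fin.succ i i = 1 := by
      intro i
      simp only [Matrix.submatrix_apply, Hmat, Matrix.of_apply, Fin.coe_castSucc, Fin.val_succ]
      rw [if_neg (by omega), if_neg (by omega)]
      simp
    rw [Finset.prod_congr rfl (fun i _ => hdiag i), Finset.prod_const_one]
  · intro a b hab
    have hab' : (a : ℕ) < (b : ℕ) := hab
    simp only [Matrix.submatrix_apply, Hmat, Matrix.of_apply, Fin.coe_castSucc, Fin.val_succ]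
    rw [if_neg (by omega), if_neg (by omega), if_neg (by omega)]

lemma det_Jmat {F : Type*} [Field F] (j h : ℕ → F) (hh0 : h 0 = 1)
    (hD : ∀ n : ℕ, 1 ≤ n → n • h n = ∑ r ∈ Finset.Icc 1 n, j r * h (n - r)) (m : ℕ) :
    (Jmat j (m+1)).det = ((m+1).factorial : F) * h (m+1) := by
  have hrow : ∀ i : Fin (m+1),
      (∑ k, (fun k : Fin (m+1) => h (k : ℕ)) k * Jmat j (m+1) i k)
        = if i = Fin.last m then ((m + 1 : ℕ) : F) * h (m + 1) else 0 := by
    intro i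
    have hfin : (∑ k : Fin (m+1), h (k : ℕ) * Jmat j (m+1) i k)
        = ∑ k ∈ range (m+1), h k *
            (if k ≤ (i : ℕ) then j ((i : ℕ) - k + 1)
              else if k = (i : ℕ) + 1 then -(((i : ℕ) + 1 : ℕ) : F) else 0) := by
      rw [← Fin.sum_univ_eq_sum_range (fun k => h k *
        (if k ≤ (i : ℕ) then j ((i : ℕ) - k + 1)
          else if k = (i : ℕ) + 1 then -(((i : ℕ) + 1 : ℕ) : F) else 0)) (m+1)]
      exact Finset.sum_congr rfl fun k _ => by simp [Jmat]
    rw [hfin, rowJ j h hD (Nat.lt_succ_iff.mp i.isLt)]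
    by_cases hi : i = Fin.last m
    · rw [if_pos (by rw [hi, Fin.val_last]), if_pos hi]
    · rw [if_neg (fun hc => hi (Fin.ext (by rw [hc, Fin.val_last]))), if_neg hi]
  have key := det_aux (Jmat j (m+1)) (fun k : Fin (m+1) => h (k : ℕ))
    (((m + 1 : ℕ) : F) * h (m + 1)) hrow
  simp only [Fin.val_zero] at key
  rw [hh0, one_mul, minorJ] at key
  rw [key]
  have : ((m+1).factorial : F) = ((m + 1 : ℕ) : F) * (m.factorial : F) := by
    rw [Nat.factorial_succ]; push_cast; ring
  rw [this]
  have hsq : (-1:F)^m * (-1:F)^m = 1 := by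
    rw [← pow_add, ← two_mul, pow_mul]; norm_num
  linear_combination (((m + 1 : ℕ) : F) * (m.factorial : F) * h (m + 1)) * hsq

lemma det_Hmat {F : Type*} [Field F] (j h : ℕ → F) (hh0 : h 0 = 1)
    (hD : ∀ n : ℕ, 1 ≤ n → n • h n = ∑ r ∈ Finset.Icc 1 n, j r * h (n - r)) (m : ℕ) :
    (Hmat h (m+1)).det = (-1:F)^m * j (m+1) := by
  have hrow : ∀ i : Fin (m+1),
      (∑ k, (fun k : Fin (m+1) => if (k : ℕ) = 0 then (-1 : F) else j (k : ℕ)) k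
          * Hmat h (m+1) i k)
        = if i = Fin.last m then -(j (m + 1)) else 0 := by
    intro i
    have hfin : (∑ k : Fin (m+1),
          (if (k : ℕ) = 0 then (-1 : F) else j (k : ℕ)) * Hmat h (m+1) i k)
        = ∑ k ∈ range (m+1), (if k = 0 then (-1 : F) else j k) *
            (if k = 0 then (((i : ℕ)+1) • h ((i : ℕ)+1) : F)
              else if k ≤ (i : ℕ) then h ((i : ℕ) - k + 1)
              else if k = (i : ℕ) + 1 then 1 else 0) := by
      rw [← Fin.sum_univ_eq_sum_range (fun k => (if k = 0 then (-1 : F) else j k) *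
        (if k = 0 then (((i : ℕ)+1) • h ((i : ℕ)+1) : F)
          else if k ≤ (i : ℕ) then h ((i : ℕ) - k + 1)
          else if k = (i : ℕ) + 1 then 1 else 0)) (m+1)]
      exact Finset.sum_congr rfl fun k _ => by simp [Hmat]
    rw [hfin, rowH j h hh0 hD (Nat.lt_succ_iff.mp i.isLt)]
    by_cases hi : i = Fin.last m
    · rw [if_pos (by rw [hi, Fin.val_last]), if_pos hi]
    · rw [if_neg (fun hc => hi (Fin.ext (by rw [hc, Fin.val_last]))), if_neg hi]
  have key := det_aux (Hmat h (m+1))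
    (fun k : Fin (m+1) => if (k : ℕ) = 0 then (-1 : F) else j (k : ℕ))
    (-(j (m + 1))) hrow
  rw [minorH] at key
  simp only [Fin.val_zero, reduceIte] at key
  linear_combination (-1 : F) * key

/-- For a sequence `f` with `f 1 = 1` over a field of characteristic zero, build `j` by
running (D1) with `h = (1, f 1, f 2, …)`, and `h'` by running (D1) with `j' = f`.
Then for every `n ≥ 1`: `f n = 0` ↔ `det (J_n(j̄)) = 0` ↔ `det (H_n(h̄')) = 0`. -/
theorem f_eq_zero_iff_det_Jmat_eq_zero_iff_det_Hmat_eq_zero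
    {F : Type*} [Field F] [CharZero F] (f : ℕ → F) (hf1 : f 1 = 1)
    (h : ℕ → F) (hh0 : h 0 = 1) (hhf : ∀ n : ℕ, 1 ≤ n → h n = f n)
    (j : ℕ → F) (hj0 : j 0 = 0)
    (hD : ∀ n : ℕ, 1 ≤ n → n • h n = ∑ r ∈ Finset.Icc 1 n, j r * h (n - r))
    (h' : ℕ → F) (hh'0 : h' 0 = 1)
    (hD' : ∀ n : ℕ, 1 ≤ n → n • h' n = ∑ r ∈ Finset.Icc 1 n, f r * h' (n - r)) :
    ∀ n : ℕ, 1 ≤ n →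
      ((f n = 0 ↔ (Jmat j n).det = 0) ∧ (f n = 0 ↔ (Hmat h' n).det = 0)) := by
  intro n hn
  obtain ⟨m, rfl⟩ : ∃ m, n = m + 1 := ⟨n - 1, by omega⟩
  constructor
  · rw [det_Jmat j h hh0 hD m, hhf (m+1) (by omega)]
    rw [mul_eq_zero]
    have hfac : (((m+1).factorial : ℕ) : F) ≠ 0 := by
      exact_mod_cast Nat.cast_ne_zero.mpr (Nat.factorial_ne_zero (m+1))
    constructor
    · intro hz; right; exact hz
    · rintro (hz | hz)
      · exact absurd hz hfac
      · exact hz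
  · rw [det_Hmat f h' hh'0 hD' m]
    rw [mul_eq_zero]
    have hne : ((-1:F)^m) ≠ 0 := by
      apply pow_ne_zero; norm_num
    constructor
    · intro hz; right; exact hz
    · rintro (hz | hz)
      · exact absurd hz hne
      · exact hz
end
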